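/- arXiv:2309.15030 — 2 statements merged into one kernel-verified Lean document; each statement's English description precedes it below -/
import Mathlib

section
/- The minimum of ||AC||_F^2 over Hermitian A subject to tr(AΓ) = 1 (C = εΓ + I positive definite, Γ positive diagonal) equals 1/||Γ C^{-1}||_F^2, which coincides with the Cramér–Rao bound for estimating ε from r ~ CN(0, εΓ + I). -/
open Matrix

/-- The minimum of `‖A C‖_F²` over Hermitian `A` subject to
`tr (A Γ) = 1`, with `Γ = diag γ` positive and `C = εΓ + I` positive definite
diagonal, equals `1 / ‖Γ C⁻¹‖_F² = 1 / ∑ (γ n / (ε γ n + 1))²`, which is the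
Cramér–Rao bound for estimating `ε` from `r ~ CN(0, εΓ + I)`. -/
theorem min_quadratic_form_eq_crb
    (N : ℕ) (hN : 0 < N) (γ : Fin N → ℝ) (hγ : ∀ n, 0 < γ n)
    (ε : ℝ) (hε : 0 ≤ ε) :
    IsLeast
      { v : ℝ | ∃ A : Matrix (Fin N) (Fin N) ℂ, A.IsHermitian ∧
          (A * Matrix.diagonal fun n => (γ n : ℂ)).trace = 1 ∧
          v = ∑ i, ∑ j, ‖A i j‖ ^ 2 * (ε * γ j + 1) ^ 2 }
      (1 / ∑ n, (γ n / (ε * γ n + 1)) ^ 2) := by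
  have hc : ∀ n, (0:ℝ) < ε * γ n + 1 := fun n => by nlinarith [hγ n, (hγ n).le]
  set S : ℝ := ∑ n, (γ n / (ε * γ n + 1)) ^ 2 with hSdef
  have hS : 0 < S := by
    apply Finset.sum_pos (fun n _ => by have := hc n; have := hγ n; positivity)
    exact Finset.univ_nonempty_iff.2 ⟨⟨0, hN⟩⟩
  set a : Fin N → ℝ := fun n => γ n / (ε * γ n + 1) ^ 2 / S with ha
  constructor
  · -- membership: the optimal diagonal A
    refine ⟨Matrix.diagonal (fun n => (a n : ℂ)), ?_, ?_, ?_⟩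
    · rw [Matrix.isHermitian_diagonal_iff]
      intro n
      exact Complex.conj_ofReal _
    · have h1 : (Matrix.diagonal (fun n => (a n : ℂ)) *
          Matrix.diagonal fun n => (γ n : ℂ)).trace = ∑ n, ((a n : ℂ) * (γ n : ℂ)) := by
        rw [Matrix.diagonal_mul_diagonal, Matrix.trace_diagonal]
      rw [h1]
      have hreal : ∑ n, a n * γ n = 1 := by
        have hterm : ∀ n : Fin N, a n * γ n = (γ n / (ε * γ n + 1)) ^ 2 / S := by
          intro n
          have h2 : (ε * γ n + 1 : ℝ) ≠ 0 := (hc n).ne'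
          rw [ha]
          field_simp
        rw [Finset.sum_congr rfl fun n _ => hterm n, ← Finset.sum_div, ← hSdef,
          div_self hS.ne']
      calc ∑ n, ((a n : ℂ) * (γ n : ℂ)) = ((∑ n, a n * γ n : ℝ) : ℂ) := by push_cast; rfl
        _ = 1 := by rw [hreal]; norm_num
    · have hrow : ∀ i : Fin N,
          ∑ j, ‖Matrix.diagonal (fun n => (a n : ℂ)) i j‖ ^ 2 * (ε * γ j + 1) ^ 2
            = (a i) ^ 2 * (ε * γ i + 1) ^ 2 := by
        intro i
        rw [Finset.sum_eq_single i]
        · rw [Matrix.diagonal_apply_eq]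
          rw [Complex.norm_real, Real.norm_eq_abs, sq_abs]
        · intro j _ hj
          rw [Matrix.diagonal_apply_ne' _ hj]
          simp
        · intro h; exact absurd (Finset.mem_univ i) h
      rw [Finset.sum_congr rfl fun i _ => hrow i]
      have hterm : ∀ i : Fin N,
          (a i) ^ 2 * (ε * γ i + 1) ^ 2 = (γ i / (ε * γ i + 1)) ^ 2 / S ^ 2 := by
        intro i
        have h2 : (ε * γ i + 1 : ℝ) ≠ 0 := (hc i).ne'
        rw [ha]
        field_simp
      rw [Finset.sum_congr rfl fun i _ => hterm i, ← Finset.sum_div, ← hSdef]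
      rw [sq]
      rw [div_mul_eq_div_div, div_self hS.ne']
  · -- lower bound
    rintro v ⟨A, -, htr, rfl⟩
    set D : ℝ := ∑ n, ‖A n n‖ ^ 2 * (ε * γ n + 1) ^ 2 with hD
    have hDle : D ≤ ∑ i, ∑ j, ‖A i j‖ ^ 2 * (ε * γ j + 1) ^ 2 := by
      apply Finset.sum_le_sum
      intro i _
      exact Finset.single_le_sum (f := fun j => ‖A i j‖ ^ 2 * (ε * γ j + 1) ^ 2)
        (fun j _ => by have := hc j; positivity) (Finset.mem_univ i)
    have htr' : (1 : ℝ) ≤ ∑ n, ‖A n n‖ * γ n := by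
      have h1 : (A * Matrix.diagonal fun n => (γ n : ℂ)).trace = ∑ n, A n n * (γ n : ℂ) := by
        simp [Matrix.trace, Matrix.diag, Matrix.mul_diagonal]
      rw [h1] at htr
      calc (1:ℝ) = ‖(1 : ℂ)‖ := by simp
        _ = ‖∑ n, A n n * (γ n : ℂ)‖ := by rw [htr]
        _ ≤ ∑ n, ‖A n n * (γ n : ℂ)‖ := norm_sum_le _ _
        _ = ∑ n, ‖A n n‖ * γ n := by
              refine Finset.sum_congr rfl fun n _ => ?_
              rw [norm_mul, Complex.norm_real, Real.norm_eq_abs, abs_of_pos (hγ n)]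
    have cs : (∑ n, ‖A n n‖ * γ n) ^ 2 ≤ D * S := by
      have key := Finset.sum_mul_sq_le_sq_mul_sq Finset.univ
        (fun n => ‖A n n‖ * (ε * γ n + 1)) (fun n => γ n / (ε * γ n + 1))
      have heq : ∀ n : Fin N, ‖A n n‖ * (ε * γ n + 1) * (γ n / (ε * γ n + 1))
          = ‖A n n‖ * γ n := by
        intro n
        have h2 : (ε * γ n + 1 : ℝ) ≠ 0 := (hc n).ne'
        field_simp
      have heq2 : ∀ n : Fin N, (‖A n n‖ * (ε * γ n + 1)) ^ 2
          = ‖A n n‖ ^ 2 * (ε * γ n + 1) ^ 2 := fun n => by ring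
      rw [Finset.sum_congr rfl fun n _ => heq n,
        Finset.sum_congr rfl fun n _ => heq2 n] at key
      exact key
    have h1 : (1:ℝ) ≤ D * S := by
      calc (1:ℝ) = 1 ^ 2 := by norm_num
        _ ≤ (∑ n, ‖A n n‖ * γ n) ^ 2 := by
            apply pow_le_pow_left₀ (by norm_num) htr'
        _ ≤ D * S := cs
    calc 1 / S ≤ D := by rw [div_le_iff₀ hS]; linarith
      _ ≤ _ := hDle
end

section
/- QMMSE solution: Let σ² > 0, Γ positive diagonal, and C̊² = (σ²+1)Γ² + 2Γ + I. The diagonal A minimizing V(A) = σ²(1 - tr(AΓ))² + ||A C̊||_F² is A = σ² Γ C̊^{-2} / (1 + σ² ||Γ C̊^{-1}||_F²), and the minimum value of V is σ²/(1 + σ² ||Γ C̊^{-1}||_F²). -/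
/-!
`V` is a convex quadratic in `a`, so it is minimized exactly at its critical point. Expanding
`V` around a critical point `b` leaves, besides `V b`, only the nonnegative quadratic form
`σ² (∑ dₙ γₙ)² + ∑ dₙ² cₙ` in `d = a - b`. The critical-point equations
`bₙ cₙ = σ² (1 - ∑ bₘ γₘ) γₙ` are solved by the stated `A`, and at a critical point the
cost collapses to `σ² (1 - ∑ bₙ γₙ)`.
-/

open Finset

section

variable {ι : Type*} [Fintype ι] (σ2 : ℝ) (γ c : ι → ℝ)

/-- The cost `V(A) = σ²(1 - tr (A Γ))² + ‖A C̊‖_F²` of `A = diag a`, where `c = diag C̊²`. -/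
def qmmseCost (a : ι → ℝ) : ℝ :=
  σ2 * (1 - ∑ n, a n * γ n) ^ 2 + ∑ n, a n ^ 2 * c n

/-- The vanishing of the gradient of `qmmseCost` at `b`. -/
def IsQmmseCritical (b : ι → ℝ) : Prop :=
  ∀ n, b n * c n = σ2 * (1 - ∑ m, b m * γ m) * γ n

variable {σ2 γ c}

theorem IsQmmseCritical.qmmseCost_eq_add {b : ι → ℝ}
    (hb : IsQmmseCritical σ2 γ c b) (a : ι → ℝ) :
    qmmseCost σ2 γ c a = qmmseCost σ2 γ c b
      + σ2 * (∑ n, (a n - b n) * γ n) ^ 2 + ∑ n, (a n - b n) ^ 2 * c n := by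
  set t := ∑ m, b m * γ m
  have h_lin : ∑ n, a n * γ n = t + ∑ n, (a n - b n) * γ n := by
    rw [← sum_add_distrib]
    exact sum_congr rfl fun n _ => by ring
  have h_cross : ∑ n, (a n - b n) * (b n * c n) = σ2 * (1 - t) * ∑ n, (a n - b n) * γ n := by
    simp_rw [hb _, mul_sum]
    exact sum_congr rfl fun n _ => by ring
  have h_quad : ∑ n, a n ^ 2 * c n
      = ∑ n, b n ^ 2 * c n + 2 * ∑ n, (a n - b n) * (b n * c n) + ∑ n, (a n - b n) ^ 2 * c n := by
    rw [mul_sum, ← sum_add_distrib, ← sum_add_distrib]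
    exact sum_congr rfl fun n _ => by ring
  unfold qmmseCost
  rw [h_lin, h_quad, h_cross]
  ring

theorem IsQmmseCritical.qmmseCost_eq {b : ι → ℝ}
    (hb : IsQmmseCritical σ2 γ c b) :
    qmmseCost σ2 γ c b = σ2 * (1 - ∑ n, b n * γ n) := by
  have h_quad : ∑ n, b n ^ 2 * c n = σ2 * (1 - ∑ m, b m * γ m) * ∑ n, b n * γ n := by
    rw [mul_sum]
    exact sum_congr rfl fun n _ => by linear_combination b n * hb n
  unfold qmmseCost
  rw [h_quad]
  ring

theorem IsQmmseCritical.qmmseCost_le (hσ2 : 0 ≤ σ2) (hc : ∀ n, 0 ≤ c n) {b : ι → ℝ}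
    (hb : IsQmmseCritical σ2 γ c b) (a : ι → ℝ) :
    qmmseCost σ2 γ c b ≤ qmmseCost σ2 γ c a := by
  rw [hb.qmmseCost_eq_add a, add_assoc]
  have : 0 ≤ ∑ n, (a n - b n) ^ 2 * c n :=
    sum_nonneg fun n _ => mul_nonneg (sq_nonneg _) (hc n)
  have : 0 ≤ σ2 * (∑ n, (a n - b n) * γ n) ^ 2 := by positivity
  linarith

variable (σ2 γ c) in
/-- The entries of `σ² Γ C̊⁻² / (1 + σ² ‖Γ C̊⁻¹‖_F²)`. -/
noncomputable def qmmseSolution (n : ι) : ℝ :=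
  σ2 * γ n / c n / (1 + σ2 * ∑ m, γ m ^ 2 / c m)

theorem one_sub_sum_qmmseSolution_mul (hc : ∀ n, c n ≠ 0)
    (hD : 1 + σ2 * ∑ m, γ m ^ 2 / c m ≠ 0) :
    1 - ∑ n, qmmseSolution σ2 γ c n * γ n = (1 + σ2 * ∑ m, γ m ^ 2 / c m)⁻¹ := by
  unfold qmmseSolution
  generalize hS : ∑ m, γ m ^ 2 / c m = S at hD ⊢
  have h_sum : ∑ n, σ2 * γ n / c n / (1 + σ2 * S) * γ n
      = σ2 / (1 + σ2 * S) * ∑ n, γ n ^ 2 / c n := by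
    rw [mul_sum]
    refine sum_congr rfl fun n _ => ?_
    have := hc n
    field_simp
  rw [h_sum, hS]
  field_simp
  ring

theorem isQmmseCritical_qmmseSolution (hc : ∀ n, c n ≠ 0)
    (hD : 1 + σ2 * ∑ m, γ m ^ 2 / c m ≠ 0) :
    IsQmmseCritical σ2 γ c (qmmseSolution σ2 γ c) := by
  intro n
  rw [one_sub_sum_qmmseSolution_mul hc hD]
  have := hc n
  unfold qmmseSolution
  field_simp

end

theorem qmmse_coefficient_pos {σ2 : ℝ} (hσ2 : 0 < σ2) (γ : ℝ) :
    0 < (σ2 + 1) * γ ^ 2 + 2 * γ + 1 := by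
  nlinarith [sq_nonneg ((σ2 + 1) * γ + 1)]

theorem qmmse_minimizer_general
    (N : ℕ) (γ : Fin N → ℝ)
    (σ2 : ℝ) (hσ2 : 0 < σ2)
    (c2 : Fin N → ℝ) (hc2 : ∀ n, c2 n = (σ2 + 1) * (γ n) ^ 2 + 2 * γ n + 1)
    (S : ℝ) (hS : S = ∑ n, (γ n) ^ 2 / c2 n)
    (astar : Fin N → ℝ) (hastar : ∀ n, astar n = σ2 * γ n / c2 n / (1 + σ2 * S)) :
    (σ2 * (1 - ∑ n, astar n * γ n) ^ 2 + ∑ n, (astar n) ^ 2 * c2 n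
        = σ2 / (1 + σ2 * S)) ∧
    (∀ a : Fin N → ℝ,
      σ2 / (1 + σ2 * S)
        ≤ σ2 * (1 - ∑ n, a n * γ n) ^ 2 + ∑ n, (a n) ^ 2 * c2 n) := by
  have hc : ∀ n, 0 < c2 n := fun n => hc2 n ▸ qmmse_coefficient_pos hσ2 (γ n)
  have hD : 1 + σ2 * ∑ n, γ n ^ 2 / c2 n ≠ 0 := by
    have : 0 ≤ ∑ n, γ n ^ 2 / c2 n := sum_nonneg fun n _ => div_nonneg (sq_nonneg _) (hc n).le
    positivity
  obtain rfl : astar = qmmseSolution σ2 γ c2 := funext fun n => by rw [hastar, hS]; rfl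
  have hcrit := isQmmseCritical_qmmseSolution (fun n => (hc n).ne') hD
  have h_min : qmmseCost σ2 γ c2 (qmmseSolution σ2 γ c2) = σ2 / (1 + σ2 * S) := by
    rw [hcrit.qmmseCost_eq, one_sub_sum_qmmseSolution_mul (fun n => (hc n).ne') hD,
      hS, div_eq_mul_inv]
  exact ⟨h_min, fun a => h_min ▸ hcrit.qmmseCost_le hσ2.le (fun n => (hc n).le) a⟩

/-- QMMSE: with `Γ = diag γ` positive, `σ² > 0`,
`C̊² = (σ²+1)Γ² + 2Γ + I` diagonal with entries `c2 n`, the diagonal matrix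
`A = diag a` minimizing `V(a) = σ²(1 - tr (A Γ))² + ‖A C̊‖_F²` is
`A = σ² Γ C̊⁻² / (1 + σ² ‖Γ C̊⁻¹‖_F²)`, and the minimum value of `V` is
`σ² / (1 + σ² ‖Γ C̊⁻¹‖_F²)`. -/
theorem qmmse_minimizer
    (N : ℕ) (γ : Fin N → ℝ) (hγ : ∀ n, 0 < γ n)
    (σ2 : ℝ) (hσ2 : 0 < σ2)
    (c2 : Fin N → ℝ) (hc2 : ∀ n, c2 n = (σ2 + 1) * (γ n) ^ 2 + 2 * γ n + 1)
    (S : ℝ) (hS : S = ∑ n, (γ n) ^ 2 / c2 n)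
    (astar : Fin N → ℝ) (hastar : ∀ n, astar n = σ2 * γ n / c2 n / (1 + σ2 * S)) :
    (σ2 * (1 - ∑ n, astar n * γ n) ^ 2 + ∑ n, (astar n) ^ 2 * c2 n
        = σ2 / (1 + σ2 * S)) ∧
    (∀ a : Fin N → ℝ,
      σ2 / (1 + σ2 * S)
        ≤ σ2 * (1 - ∑ n, a n * γ n) ^ 2 + ∑ n, (a n) ^ 2 * c2 n) :=
  qmmse_minimizer_general N γ σ2 hσ2 c2 hc2 S hS astar hastar
end
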